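/- A real polynomial f of degree n with f(0) > 0 is stable if and only if the first n+1 leading principal minors Δ₁(f), …, Δ_{n+1}(f) of its infinite Hurwitz matrix H(f) are all positive. -/

import Mathlib

/-!
When `a₁ ≠ 0`, Routh's reduction writes `f = X g + c E(g)` with `c = a₀ / a₁`, where `E(g)` keeps
the even-degree terms of `g`; then `deg g = deg f - 1`.

The first column of `H(f)` is `(a₀, 0, 0, …)`; expanding along it and subtracting `c` times each
even row from the next odd row leaves `H(g)`, so `Δ_{j+1}(f) = a₀ Δ_j(g)`.

For `c > 0`, `f` is stable iff `g` is. If `g` is stable then `|g(-z)| ≤ |g(z)|` for `Re z ≥ 0`, so a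
root `z ≠ 0` of `f` there would satisfy `|z + c/2| ≤ c/2`, which is impossible. Conversely, the
polynomials `f - t c E(g)`, `t ∈ [0, 1]`, join `f` to `X g` with constant degree and leading
coefficient, so their roots stay bounded; for `t < 1` none lies on the imaginary axis, hence none
enters the open right half-plane, and an imaginary root of `g` would be one of `f`.

Each side of the criterion forces `a₁ > 0` (`Δ₂ = a₀ a₁`, and `a₁ / a₀ = -∑ 1/r` over the roots of a
stable `f`), and induction on the degree concludes.
-/

open Polynomial

/-- The infinite Hurwitz matrix of a real polynomial (0-indexed): row 0 is
`(a₀, a₂, a₄, …)`, row 1 is `(0, a₁, a₃, …)`, row 2 is `(0, a₀, a₂, …)`, etc.,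
i.e. entry `(i,j)` is `a_{2j−i}` (interpreted as `0` when `2j − i < 0`). -/
def HurwitzMatrix (f : Polynomial ℝ) : Matrix ℕ ℕ ℝ :=
  fun i j => if i ≤ 2 * j then f.coeff (2 * j - i) else 0

/-- The infinite matrix `J(c)` (0-indexed): each even row `2i` equals
`c·e_{2i} + e_{2i+1}` and each odd row `2i+1` equals `e_{2i+3}`. -/
def Jmat (c : ℝ) : Matrix ℕ ℕ ℝ :=
  fun i j =>
    if i % 2 = 0 then (if j = i then c else if j = i + 1 then 1 else 0)
    else (if j = i + 2 then 1 else 0)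

/-- Product of infinite matrices, defined via (absolutely convergent) sums;
well-defined in particular when `A` is row-finite. -/
noncomputable def mulInf (A B : Matrix ℕ ℕ ℝ) : Matrix ℕ ℕ ℝ :=
  fun i j => ∑' k : ℕ, A i k * B k j

/-- The `n`-th leading principal minor of an infinite matrix. -/
noncomputable def leadingMinor (A : Matrix ℕ ℕ ℝ) (n : ℕ) : ℝ :=
  Matrix.det (Matrix.of fun i j : Fin n => A (i : ℕ) (j : ℕ))

/-- A matrix indexed by `ℕ × ℕ` is totally nonnegative if every finite minor
(with rows and columns taken in increasing order) is nonnegative. -/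
def TotallyNonneg (A : Matrix ℕ ℕ ℝ) : Prop :=
  ∀ (k : ℕ) (r c : Fin k → ℕ), StrictMono r → StrictMono c →
    0 ≤ Matrix.det (Matrix.of fun i j : Fin k => A (r i) (c j))

open Set ComplexConjugate

theorem Complex.lt_norm_add_ofReal {z : ℂ} (hz : 0 ≤ z.re) (hz0 : z ≠ 0) {r : ℝ}
    (hr : 0 ≤ r) : r < ‖z + r‖ := by
  have := Complex.normSq_pos.2 hz0
  rw [Complex.normSq_apply] at this
  refine lt_of_pow_lt_pow_left₀ 2 (norm_nonneg _) ?_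
  rw [Complex.sq_norm, Complex.normSq_apply]
  simp only [Complex.add_re, Complex.ofReal_re, Complex.add_im, Complex.ofReal_im, add_zero]
  nlinarith

theorem leadingMinor_zero (A : Matrix ℕ ℕ ℝ) : leadingMinor A 0 = 1 :=
  Matrix.det_fin_zero

theorem leadingMinor_succ_of_forall_eq_zero (A : Matrix ℕ ℕ ℝ) (hA : ∀ i, A (i + 1) 0 = 0)
    (n : ℕ) :
    leadingMinor A (n + 1) = A 0 0 * leadingMinor (fun i j => A (i + 1) (j + 1)) n := by
  rw [leadingMinor, Matrix.det_succ_column_zero, Fin.sum_univ_succ, Finset.sum_eq_zero]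
  · simp [leadingMinor, Matrix.submatrix]
  · intro i _
    simp [hA]

theorem leadingMinor_add_mul_prev_row (B : Matrix ℕ ℕ ℝ) {d : ℕ → ℝ} (hd : d 0 = 0) (n : ℕ) :
    leadingMinor (fun i j => B i j + d i * B (i - 1) j) n = leadingMinor B n := by
  set N : Matrix (Fin n) (Fin n) ℝ := Matrix.of fun i k => if (i : ℕ) = k + 1 then d i else 0
  have hN : (1 + N).det = 1 := by
    rw [Matrix.det_of_isLowerTriangular]
    · simp [N]
    · intro i k hik
      have : (i : ℕ) < k := hik
      simp [N, Fin.ne_of_val_ne this.ne, show (i : ℕ) ≠ k + 1 by omega]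
  have hNB : (Matrix.of fun i j : Fin n => B i j + d i * B (i - 1) j) =
      (1 + N) * Matrix.of fun i j : Fin n => B i j := by
    ext ⟨i, hi⟩ j
    rw [Matrix.add_mul, Matrix.one_mul, Matrix.add_apply, Matrix.mul_apply]
    rcases i with _ | i
    · simp [N, hd]
    · rw [Finset.sum_eq_single ⟨i, by omega⟩]
      · simp [N]
      · intro k _ hk
        have hik : i + 1 ≠ (k : ℕ) + 1 := fun h => hk (Fin.ext (by simp only at h ⊢; omega))
        simp only [N, Matrix.of_apply, if_neg hik, zero_mul]
      · simp
  unfold leadingMinor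
  rw [hNB, Matrix.det_mul, hN, one_mul]

namespace Polynomial

def IsHurwitzStable (p : ℝ[X]) : Prop :=
  ∀ z : ℂ, aeval z p = 0 → z.re < 0

noncomputable def evenPart {R : Type*} [Semiring R] (p : R[X]) : R[X] :=
  ∑ i ∈ p.support with Even i, monomial i (p.coeff i)

section EvenPart

variable {R : Type*} [Semiring R]

theorem coeff_evenPart (p : R[X]) (n : ℕ) :
    (evenPart p).coeff n = if Even n then p.coeff n else 0 := by
  by_cases hn : p.coeff n = 0 <;> simp [evenPart, coeff_monomial, hn]

theorem degree_evenPart_le (p : R[X]) : (evenPart p).degree ≤ p.degree := by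
  refine (degree_le_iff_coeff_zero _ _).2 fun m hm => ?_
  rw [coeff_evenPart, coeff_eq_zero_of_degree_lt hm, ite_self]

theorem coeff_X_mul_add_smul_evenPart (g : R[X]) (c : R) (k : ℕ) :
    (X * g + c • evenPart g).coeff k =
      (if k = 0 then 0 else g.coeff (k - 1)) + if Even k then c * g.coeff k else 0 := by
  rcases k with _ | k <;> simp [coeff_evenPart, coeff_X_mul]

variable {g : R[X]}

theorem degree_smul_evenPart_lt_degree_X_mul (hg : g ≠ 0) (c : R) :
    (c • evenPart g).degree < (X * g).degree :=
  calc (c • evenPart g).degree ≤ g.degree := (degree_smul_le c _).trans (degree_evenPart_le g)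
    _ < (X * g).degree := by rw [X_mul]; exact degree_lt_degree_mul_X hg

theorem degree_smul_evenPart_lt (hg : g ≠ 0) (c : R) :
    (c • evenPart g).degree < (X * g + c • evenPart g).degree := by
  rw [degree_add_eq_left_of_degree_lt (degree_smul_evenPart_lt_degree_X_mul hg c)]
  exact degree_smul_evenPart_lt_degree_X_mul hg c

theorem natDegree_X_mul_add_smul_evenPart [Nontrivial R] (hg : g ≠ 0) (c : R) :
    (X * g + c • evenPart g).natDegree = g.natDegree + 1 := by
  rw [natDegree_add_eq_left_of_degree_lt (degree_smul_evenPart_lt_degree_X_mul hg c),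
    natDegree_X_mul hg]

end EvenPart

theorem two_mul_aeval_evenPart {R A : Type*} [CommSemiring R] [CommRing A] [Algebra R A]
    (p : R[X]) (x : A) :
    2 * aeval x (evenPart p) = aeval x p + aeval (-x) p := by
  have hn : (evenPart p).natDegree < p.natDegree + 1 :=
    Nat.lt_succ_of_le (natDegree_le_natDegree (degree_evenPart_le p))
  rw [aeval_eq_sum_range' hn, aeval_eq_sum_range, aeval_eq_sum_range, Finset.mul_sum,
    ← Finset.sum_add_distrib]
  refine Finset.sum_congr rfl fun k _ => ?_
  rw [coeff_evenPart]
  rcases Nat.even_or_odd k with hk | hk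
  · rw [if_pos hk, hk.neg_pow, mul_smul_comm, two_mul, smul_add]
  · rw [if_neg (Nat.not_even_iff_odd.2 hk), hk.neg_pow, zero_smul, smul_neg, mul_zero,
      add_neg_cancel]

theorem aeval_neg_of_re_eq_zero (p : ℝ[X]) {z : ℂ} (hz : z.re = 0) :
    aeval (-z) p = conj (aeval z p) := by
  rw [← aeval_conj, show conj z = -z from Complex.ext (by simp [hz]) (by simp)]

theorem aeval_evenPart_of_re_eq_zero (p : ℝ[X]) {z : ℂ} (hz : z.re = 0) :
    aeval z (evenPart p) = (aeval z p).re := by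
  have h := two_mul_aeval_evenPart p z
  rw [aeval_neg_of_re_eq_zero p hz, Complex.add_conj, Complex.ofReal_mul,
    Complex.ofReal_ofNat] at h
  exact mul_left_cancel₀ two_ne_zero h

theorem exists_X_mul_add_smul_evenPart_eq {K : Type*} [Field K] (f : K[X]) (hf : f.coeff 1 ≠ 0) :
    ∃ g : K[X], X * g + (f.coeff 0 / f.coeff 1) • evenPart g = f := by
  -- `X g = f - c • O / X`, where `O = f - evenPart f` is the odd part of `f`
  refine ⟨divX (f - (f.coeff 0 / f.coeff 1) • divX (f - evenPart f)), ?_⟩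
  ext k
  rw [coeff_X_mul_add_smul_evenPart]
  rcases k with _ | k
  · simp [coeff_divX, coeff_evenPart, div_mul_cancel₀ _ hf]
  · by_cases hk : Even k <;> simp [coeff_divX, coeff_evenPart, Nat.even_add_one, hk]

theorem norm_aeval_eq_prod (f : ℝ[X]) (z : ℂ) :
    ‖aeval z f‖ = |f.leadingCoeff| * ((f.aroots ℂ).map fun r => ‖z - r‖).prod := by
  rw [(IsAlgClosed.splits _).aeval_eq_prod_aroots, norm_mul, norm_algebraMap', Real.norm_eq_abs]
  congr 1
  simpa [Multiset.map_map] using map_multiset_prod (normHom : ℂ →*₀ ℝ) ((f.aroots ℂ).map (z - ·))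

theorem norm_le_of_aeval_eq_zero {p : ℝ[X]} (hp : p ≠ 0) {b : ℝ} (hb : ∀ i, |p.coeff i| ≤ b)
    {z : ℂ} (hz : aeval z p = 0) : ‖z‖ ≤ b / |p.leadingCoeff| + 1 := by
  set P := p.map (algebraMap ℝ ℂ)
  have hroot : P.IsRoot z := by rwa [IsRoot, eval_map_algebraMap]
  have hb0 : 0 ≤ b := (abs_nonneg _).trans (hb 0)
  have hsup : (Finset.range P.natDegree).sup (‖P.coeff ·‖₊) ≤ b.toNNReal :=
    Finset.sup_le fun i _ => by
      rw [← NNReal.coe_le_coe, coe_nnnorm, coeff_map, norm_algebraMap', Real.norm_eq_abs,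
        Real.coe_toNNReal _ hb0]
      exact hb i
  calc ‖z‖ = (‖z‖₊ : ℝ) := rfl
    _ ≤ cauchyBound P := by exact_mod_cast (hroot.norm_lt_cauchyBound (map_ne_zero hp)).le
    _ ≤ ((b.toNNReal / ‖P.leadingCoeff‖₊ + 1 : NNReal) : ℝ) := by
      unfold cauchyBound
      gcongr
    _ = b / |p.leadingCoeff| + 1 := by
      rw [leadingCoeff_map]
      push_cast
      rw [Real.coe_toNNReal _ hb0, norm_algebraMap', Real.norm_eq_abs]

namespace IsHurwitzStable

variable {f : ℝ[X]}

theorem ne_zero (hf : IsHurwitzStable f) : f ≠ 0 := by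
  rintro rfl
  exact absurd (hf 1 (map_zero _)) (by norm_num)

theorem aeval_ne_zero (hf : IsHurwitzStable f) {z : ℂ} (hz : 0 ≤ z.re) : aeval z f ≠ 0 :=
  fun h => (hz.trans_lt (hf z h)).false

theorem re_neg_of_mem_aroots (hf : IsHurwitzStable f) {r : ℂ} (hr : r ∈ f.aroots ℂ) :
    r.re < 0 :=
  hf r (mem_aroots.1 hr).2

theorem abs_leadingCoeff_mul_re_pow_le (hf : IsHurwitzStable f) {z : ℂ} (hz : 0 ≤ z.re) :
    |f.leadingCoeff| * z.re ^ f.natDegree ≤ ‖aeval z f‖ := by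
  rw [norm_aeval_eq_prod, ← IsAlgClosed.card_aroots_eq_natDegree (B := ℂ),
    ← Multiset.prod_replicate, ← Multiset.map_const']
  gcongr
  refine Multiset.prod_map_le_prod_map₀ _ _ (fun _ _ => hz) fun r hr => ?_
  calc z.re ≤ (z - r).re := by
        rw [Complex.sub_re]; linarith [hf.re_neg_of_mem_aroots hr]
    _ ≤ ‖z - r‖ := Complex.re_le_norm _

theorem norm_aeval_neg_le (hf : IsHurwitzStable f) {z : ℂ} (hz : 0 ≤ z.re) :
    ‖aeval (-z) f‖ ≤ ‖aeval z f‖ := by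
  rw [← Complex.norm_conj, ← aeval_conj, map_neg, norm_aeval_eq_prod, norm_aeval_eq_prod]
  gcongr
  refine Multiset.prod_map_le_prod_map₀ _ _ (fun _ _ => norm_nonneg _) fun r hr => ?_
  have hr := hf.re_neg_of_mem_aroots hr
  rw [← sq_le_sq₀ (norm_nonneg _) (norm_nonneg _), Complex.sq_norm, Complex.sq_norm,
    Complex.normSq_apply, Complex.normSq_apply]
  simp only [Complex.sub_re, Complex.neg_re, Complex.conj_re, Complex.sub_im, Complex.neg_im,
    Complex.conj_im, neg_neg, add_le_add_iff_right]
  nlinarith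

theorem coeff_one_div_coeff_zero_pos (hf : IsHurwitzStable f) (hdeg : 0 < f.natDegree) :
    0 < f.coeff 1 / f.coeff 0 := by
  -- `a₁ / a₀ = f'(0) / f(0) = ∑ 1 / (0 - r)` over the roots, and each `-1 / r` has `re > 0`
  have h0 : aeval (0 : ℂ) f ≠ 0 := hf.aeval_ne_zero le_rfl
  have hlog := (IsAlgClosed.splits (f.map (algebraMap ℝ ℂ))).eval_derivative_div_eval_of_ne_zero
    (x := 0) (by rwa [eval_map_algebraMap])
  rw [derivative_map, eval_map_algebraMap, eval_map_algebraMap, ← coeff_zero_eq_aeval_zero',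
    ← coeff_zero_eq_aeval_zero', coeff_derivative] at hlog
  have hre := congrArg Complex.re hlog
  simp only [Complex.coe_algebraMap, ← Complex.ofReal_div, Complex.ofReal_re, zero_add,
    Nat.cast_zero, mul_one] at hre
  have hne : f.aroots ℂ ≠ ∅ := by
    rw [Ne, Multiset.empty_eq_zero, ← Multiset.card_eq_zero, IsAlgClosed.card_aroots_eq_natDegree]
    exact hdeg.ne'
  rw [hre, show ∀ w : ℂ, w.re = Complex.reAddGroupHom w from fun _ => rfl, map_multiset_sum,
    Multiset.map_map]
  refine lt_of_eq_of_lt ?_ (Multiset.sum_lt_sum_of_nonempty hne (f := fun _ => 0) fun r hr => ?_)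
  · simp
  · have := hf.re_neg_of_mem_aroots hr
    rw [Function.comp_apply, Complex.coe_reAddGroupHom, zero_sub, one_div, inv_neg,
      Complex.neg_re, Complex.inv_re, neg_pos]
    exact div_neg_of_neg_of_pos this (Complex.normSq_pos.2 fun h => by simp [h] at this)

end IsHurwitzStable

section Homotopy

variable {f h : ℝ[X]}

theorem degree_sub_smul_of_degree_lt (hdeg : h.degree < f.degree) (t : ℝ) :
    (f - t • h).degree = f.degree :=
  degree_sub_eq_left_of_degree_lt ((degree_smul_le t h).trans_lt hdeg)

theorem leadingCoeff_sub_smul_of_degree_lt (hdeg : h.degree < f.degree) (t : ℝ) :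
    (f - t • h).leadingCoeff = f.leadingCoeff :=
  leadingCoeff_sub_of_degree_lt ((degree_smul_le t h).trans_lt hdeg)

theorem continuous_aeval_sub_smul (f h : ℝ[X]) :
    Continuous fun p : ℝ × ℂ => aeval p.2 (f - p.1 • h) := by
  simp only [map_sub, map_smul]
  fun_prop

theorem isCompact_setOf_exists_aeval_sub_smul_eq_zero (hdeg : h.degree < f.degree) :
    IsCompact {t ∈ Icc (0 : ℝ) 1 | ∃ z : ℂ, 0 ≤ z.re ∧ aeval z (f - t • h) = 0} := by
  have hf : f ≠ 0 := by rintro rfl; simp at hdeg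
  obtain ⟨R, hroot⟩ : ∃ R, ∀ t ∈ Icc (0 : ℝ) 1, ∀ z : ℂ, aeval z (f - t • h) = 0 → ‖z‖ ≤ R := by
    refine ⟨(f.supNorm + h.supNorm) / |f.leadingCoeff| + 1, fun t ht z hz => ?_⟩
    have hne : f - t • h ≠ 0 := fun h0 => hf (by
      simpa [h0] using (leadingCoeff_sub_smul_of_degree_lt hdeg t).symm)
    rw [← leadingCoeff_sub_smul_of_degree_lt hdeg t]
    refine norm_le_of_aeval_eq_zero hne (fun i => ?_) hz
    rw [coeff_sub, coeff_smul, smul_eq_mul]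
    calc |f.coeff i - t * h.coeff i| ≤ |f.coeff i| + |t| * |h.coeff i| := by
          rw [← abs_mul]; exact abs_sub _ _
      _ ≤ f.supNorm + 1 * h.supNorm := by
          gcongr
          · exact le_supNorm f i
          · exact abs_le.2 ⟨by linarith [ht.1], ht.2⟩
          · exact le_supNorm h i
      _ = _ := by rw [one_mul]
  set K := {p : ℝ × ℂ | p.1 ∈ Icc 0 1 ∧ 0 ≤ p.2.re ∧ aeval p.2 (f - p.1 • h) = 0}
  have hK : IsCompact K := by
    refine ((isCompact_Icc (a := (0 : ℝ)) (b := 1)).prod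
      (isCompact_closedBall (0 : ℂ) R)).of_isClosed_subset ?_ ?_
    · exact (isClosed_Icc.preimage continuous_fst).inter
        ((isClosed_le continuous_const (Complex.continuous_re.comp continuous_snd)).inter
          (isClosed_eq (continuous_aeval_sub_smul f h) continuous_const))
    · rintro ⟨t, z⟩ ⟨ht, -, hz⟩
      exact ⟨ht, mem_closedBall_zero_iff.2 (hroot t ht z hz)⟩
  convert hK.image continuous_fst using 1
  ext t
  simp [K]

theorem IsHurwitzStable.re_nonpos_of_aeval_sub_eq_zero (hf : IsHurwitzStable f)
    (hdeg : h.degree < f.degree)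
    (himag : ∀ t ∈ Ico (0 : ℝ) 1, ∀ z : ℂ, z.re = 0 → aeval z (f - t • h) ≠ 0)
    {z : ℂ} (hz : aeval z (f - h) = 0) : z.re ≤ 0 := by
  set B := {t ∈ Icc (0 : ℝ) 1 | ∃ w : ℂ, 0 ≤ w.re ∧ aeval w (f - t • h) = 0}
  have hB : IsCompact B := isCompact_setOf_exists_aeval_sub_smul_eq_zero hdeg
  by_contra! hz_re
  have h1B : (1 : ℝ) ∈ B := ⟨right_mem_Icc.2 zero_le_one, z, hz_re.le, by rwa [one_smul]⟩
  set s := sInf B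
  obtain ⟨⟨hs0, hs1⟩, w, hw, hsw⟩ : s ∈ B := hB.sInf_mem ⟨1, h1B⟩
  have hstable : ∀ t ∈ Ico 0 s, IsHurwitzStable (f - t • h) := fun t ht u hu => by
    by_contra! hre
    exact notMem_of_lt_csInf ht.2 hB.bddBelow ⟨⟨ht.1, ht.2.le.trans hs1⟩, u, hre, hu⟩
  have hs : 0 < s := hs0.lt_of_ne fun h0 => hf.aeval_ne_zero hw (by simpa [← h0] using hsw)
  -- the polynomials before `s` are stable, and their common lower bound survives at `s`
  have hweak : ∀ u : ℂ, 0 < u.re → aeval u (f - s • h) ≠ 0 := by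
    intro u hu
    have hlow : |f.leadingCoeff| * u.re ^ f.natDegree ≤ ‖aeval u (f - s • h)‖ := by
      refine closure_minimal (s := Ico 0 s) (fun t ht => ?_)
        (isClosed_le continuous_const ((continuous_aeval_sub_smul f h).comp
          (Continuous.prodMk_left u)).norm)
        (by rw [closure_Ico hs.ne]; exact right_mem_Icc.2 hs0)
      have := (hstable t ht).abs_leadingCoeff_mul_re_pow_le hu.le
      rwa [leadingCoeff_sub_smul_of_degree_lt hdeg,
        natDegree_eq_of_degree_eq (degree_sub_smul_of_degree_lt hdeg t)] at this
    refine norm_pos_iff.1 (lt_of_lt_of_le ?_ hlow)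
    exact mul_pos (abs_pos.2 (leadingCoeff_ne_zero.2 hf.ne_zero)) (pow_pos hu _)
  rcases hs1.lt_or_eq with hs1 | hs1
  · exact himag s ⟨hs0, hs1⟩ w (le_antisymm (not_lt.1 fun h => hweak w h hsw) hw) hsw
  · exact hweak z hz_re (by rwa [hs1, one_smul])

end Homotopy

section RouthStep

variable {g : ℝ[X]} {c : ℝ}

theorem IsHurwitzStable.X_mul_add_smul_evenPart (hg : IsHurwitzStable g) (hc : 0 < c) :
    IsHurwitzStable (X * g + c • evenPart g) := by
  intro z hz
  by_contra! hre
  have hG : aeval z g ≠ 0 := hg.aeval_ne_zero hre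
  rw [map_add, map_mul, aeval_X, map_smul, Complex.real_smul] at hz
  have key : aeval z g * (z + (c / 2 : ℝ)) = -((c / 2 : ℝ) * aeval (-z) g) := by
    push_cast
    linear_combination hz - (c / 2 : ℂ) * two_mul_aeval_evenPart g z
  rcases eq_or_ne z 0 with rfl | hz0
  · refine hG (mul_left_cancel₀ (Complex.ofReal_ne_zero.2 hc.ne') ?_)
    push_cast at key ⊢
    rw [neg_zero] at key
    linear_combination key
  · have hnorm := congrArg norm key
    rw [norm_mul, norm_neg, norm_mul, Complex.norm_real, Real.norm_of_nonneg (by positivity)]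
      at hnorm
    have := hnorm.le.trans (mul_le_mul_of_nonneg_left (hg.norm_aeval_neg_le hre) (by positivity))
    rw [mul_comm] at this
    exact (Complex.lt_norm_add_ofReal hre hz0 (by positivity)).not_ge
      (le_of_mul_le_mul_right this (norm_pos_iff.2 hG))

theorem IsHurwitzStable.of_X_mul_add_smul_evenPart (hc : 0 < c)
    (hf : IsHurwitzStable (X * g + c • evenPart g)) : IsHurwitzStable g := by
  have hg : g ≠ 0 := by
    rintro rfl
    exact hf.ne_zero (by simp [evenPart])
  have hfg : ∀ z : ℂ, z.re = 0 →
      aeval z (X * g + c • evenPart g) = z * aeval z g + c * (aeval z g).re := by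
    intro z hz
    rw [map_add, map_mul, aeval_X, map_smul, aeval_evenPart_of_re_eq_zero g hz, Complex.real_smul]
  have himag : ∀ t ∈ Ico (0 : ℝ) 1, ∀ z : ℂ, z.re = 0 →
      aeval z (X * g + c • evenPart g - t • c • evenPart g) ≠ 0 := by
    intro t ht z hz hzero
    rw [map_sub, hfg z hz, map_smul, map_smul, aeval_evenPart_of_re_eq_zero g hz,
      Complex.real_smul, Complex.real_smul] at hzero
    have hre := congrArg Complex.re hzero
    have him := congrArg Complex.im hzero
    simp only [Complex.sub_re, Complex.add_re, Complex.mul_re, hz, zero_mul, zero_sub,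
      Complex.ofReal_re, Complex.ofReal_im, mul_zero, sub_zero, Complex.mul_im, add_zero,
      Complex.zero_re, Complex.sub_im, Complex.add_im, zero_add, Complex.zero_im, mul_eq_zero]
      at hre him
    have hGre : (aeval z g).re = 0 := by
      refine him.elim (fun h => ?_) id
      have : (c * (1 - t)) * (aeval z g).re = 0 := by rw [h] at hre; linarith
      exact (mul_eq_zero.1 this).resolve_left (mul_pos hc (sub_pos.2 ht.2)).ne'
    have hzG : z.im * (aeval z g).im = 0 := by rw [hGre] at hre; linarith
    refine hf.aeval_ne_zero hz.ge ?_
    rw [hfg z hz]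
    apply Complex.ext <;> simp [hz, hGre, hzG]
  intro z hz
  have hle : z.re ≤ 0 := hf.re_nonpos_of_aeval_sub_eq_zero (degree_smul_evenPart_lt hg c) himag
    (by rw [add_sub_cancel_right, map_mul, hz, mul_zero])
  refine hle.lt_of_ne fun hre => hf.aeval_ne_zero hre.ge ?_
  rw [hfg z hre, hz, mul_zero, Complex.zero_re, Complex.ofReal_zero, mul_zero, add_zero]

theorem isHurwitzStable_X_mul_add_smul_evenPart_iff (hc : 0 < c) :
    IsHurwitzStable (X * g + c • evenPart g) ↔ IsHurwitzStable g :=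
  ⟨IsHurwitzStable.of_X_mul_add_smul_evenPart hc, fun hg => hg.X_mul_add_smul_evenPart hc⟩

end RouthStep

end Polynomial

theorem leadingMinor_hurwitzMatrix_one (f : ℝ[X]) :
    leadingMinor (HurwitzMatrix f) 1 = f.coeff 0 := by
  simp [leadingMinor, HurwitzMatrix]

theorem leadingMinor_hurwitzMatrix_two (f : ℝ[X]) :
    leadingMinor (HurwitzMatrix f) 2 = f.coeff 0 * f.coeff 1 := by
  simp [leadingMinor, Matrix.det_fin_two, HurwitzMatrix]

theorem hurwitzMatrix_X_mul_add_smul_evenPart_succ_succ (g : ℝ[X]) (c : ℝ) (i j : ℕ) :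
    HurwitzMatrix (X * g + c • evenPart g) (i + 1) (j + 1) =
      HurwitzMatrix g i j + (if Even i then 0 else c) * HurwitzMatrix g (i - 1) j := by
  simp only [HurwitzMatrix, coeff_X_mul_add_smul_evenPart, Nat.even_iff]
  split_ifs <;> grind

theorem leadingMinor_hurwitzMatrix_X_mul_add_smul_evenPart (g : ℝ[X]) (c : ℝ) (n : ℕ) :
    leadingMinor (HurwitzMatrix (X * g + c • evenPart g)) (n + 1) =
      c * g.coeff 0 * leadingMinor (HurwitzMatrix g) n := by
  rw [leadingMinor_succ_of_forall_eq_zero _ (fun i => if_neg (by omega))]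
  simp_rw [hurwitzMatrix_X_mul_add_smul_evenPart_succ_succ]
  rw [leadingMinor_add_mul_prev_row _ (d := fun i => if Even i then 0 else c) (if_pos Even.zero)]
  congr 1
  simp [HurwitzMatrix, coeff_evenPart]

theorem forall_leadingMinor_pos_succ_iff {A B : Matrix ℕ ℕ ℝ} {a : ℝ} (ha : 0 < a)
    (hAB : ∀ j, leadingMinor A (j + 1) = a * leadingMinor B j) (n : ℕ) :
    (∀ j, 1 ≤ j → j ≤ n + 1 → 0 < leadingMinor A j) ↔
      ∀ j, 1 ≤ j → j ≤ n → 0 < leadingMinor B j := by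
  constructor
  · intro h j hj1 hj2
    have := h (j + 1) (by omega) (by omega)
    rw [hAB] at this
    exact pos_of_mul_pos_right this ha.le
  · intro h j hj1 hj2
    obtain ⟨j, rfl⟩ := Nat.exists_eq_add_of_le' hj1
    rw [hAB]
    rcases j.eq_zero_or_pos with rfl | hj
    · rwa [leadingMinor_zero, mul_one]
    · exact mul_pos ha (h j hj (by omega))

theorem exists_routh_reduction {f : ℝ[X]} (hf0 : 0 < f.coeff 0) (hf1 : 0 < f.coeff 1) :
    ∃ g : ℝ[X], g.natDegree + 1 = f.natDegree ∧ 0 < g.coeff 0 ∧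
      (IsHurwitzStable f ↔ IsHurwitzStable g) ∧
      ∀ j, leadingMinor (HurwitzMatrix f) (j + 1) =
        f.coeff 0 * leadingMinor (HurwitzMatrix g) j := by
  set c := f.coeff 0 / f.coeff 1
  obtain ⟨g, hfg⟩ := exists_X_mul_add_smul_evenPart_eq f hf1.ne'
  have hg0 : g.coeff 0 = f.coeff 1 := by
    rw [← hfg, coeff_X_mul_add_smul_evenPart]
    simp
  have hg : g ≠ 0 := by
    rintro rfl
    exact hf1.ne' (by simpa using hg0.symm)
  refine ⟨g, ?_, hg0 ▸ hf1, ?_, fun j => ?_⟩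
  · rw [← natDegree_X_mul_add_smul_evenPart hg c, hfg]
  · have := isHurwitzStable_X_mul_add_smul_evenPart_iff (g := g) (div_pos hf0 hf1)
    rwa [hfg] at this
  · have := leadingMinor_hurwitzMatrix_X_mul_add_smul_evenPart g c j
    rwa [hfg, hg0, div_mul_cancel₀ _ hf1.ne'] at this

theorem isHurwitzStable_iff_forall_leadingMinor_pos {f : ℝ[X]} (hf0 : 0 < f.coeff 0) :
    IsHurwitzStable f ↔
      ∀ j, 1 ≤ j → j ≤ f.natDegree + 1 → 0 < leadingMinor (HurwitzMatrix f) j := by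
  induction hn : f.natDegree generalizing f with
  | zero =>
    refine iff_of_true (fun z hz => ?_) fun j hj1 hj2 => ?_
    · rw [eq_C_of_natDegree_eq_zero hn, aeval_C, map_eq_zero] at hz
      exact absurd hz hf0.ne'
    · obtain rfl : j = 1 := by omega
      rwa [leadingMinor_hurwitzMatrix_one]
  | succ n ih =>
    suffices h : 0 < f.coeff 1 → (IsHurwitzStable f ↔
        ∀ j, 1 ≤ j → j ≤ n + 1 + 1 → 0 < leadingMinor (HurwitzMatrix f) j) by
      refine ⟨fun hf => (h ?_).1 hf, fun hΔ => (h ?_).2 hΔ⟩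
      · exact (div_pos_iff_of_pos_right hf0).1 (hf.coeff_one_div_coeff_zero_pos (by omega))
      · have := hΔ 2 (by omega) (by omega)
        rw [leadingMinor_hurwitzMatrix_two] at this
        exact pos_of_mul_pos_right this hf0.le
    intro hf1
    obtain ⟨g, hgn, hg0, hstab, hΔ⟩ := exists_routh_reduction hf0 hf1
    rw [hstab, ih hg0 (by omega), forall_leadingMinor_pos_succ_iff hf0 hΔ]

theorem stmt15 (f : Polynomial ℝ) (n : ℕ) (hdeg : f.natDegree = n)
    (hf0 : 0 < f.eval 0) :
    (∀ z : ℂ, Polynomial.aeval z f = 0 → z.re < 0) ↔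
      ∀ j : ℕ, 1 ≤ j → j ≤ n + 1 → 0 < leadingMinor (HurwitzMatrix f) j := by
  subst hdeg
  exact isHurwitzStable_iff_forall_leadingMinor_pos (by rwa [coeff_zero_eq_eval_zero])
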